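/- The affine implicit curve T_n(x) = T_m(y) has exactly ⌊(n−1)/2⌋·⌊(m−1)/2⌋ + ⌊n/2⌋·⌊m/2⌋ singular points, all of which are real double points; they are the solutions of (T_n(x) = T_m(y) = 2 with T_n'(x) = T_m'(y) = 0) or (T_n(x) = T_m(y) = −2 with T_n'(x) = T_m'(y) = 0). -/

import Mathlib

open Polynomial Real

/-!
Substituting `x = 2 cos θ` turns `T n` into `2 cos (n θ)`, and differentiating in `θ` gives
`T_n'(2 cos θ) sin θ = n sin (n θ)`. Hence `T_n'` vanishes at the `n - 1` distinct real points
`2 cos (k π / n)`, `0 < k < n`, where `T_n = 2 (-1) ^ k`; as `deg T_n' ≤ n - 1` these are all its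
roots. A singular point of `T_n(x) = T_m(y)` is a pair of critical points of `T_n` and `T_m`
with the same critical value, which is `2` (for even `k`, `⌊(n-1)/2⌋` of them) or `-2`
(for odd `k`, `⌊n/2⌋` of them).
-/

/-- The monic Chebyshev polynomials of the first kind (over ℂ). -/
noncomputable def T : ℕ → Polynomial ℂ
  | 0 => 2
  | 1 => X
  | n + 2 => X * T (n + 1) - T n

theorem T_eq_chebyshev_C (n : ℕ) : T n = Chebyshev.C ℂ n := by
  induction n using Nat.twoStepInduction with
  | zero => simp [T]
  | one => simp [T]
  | more n ih₀ ih₁ =>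
    rw [T, ih₀, ih₁]
    exact_mod_cast (Chebyshev.C_add_two ℂ n).symm

theorem natDegree_T_le (n : ℕ) : (T n).natDegree ≤ n := by
  induction n using Nat.twoStepInduction with
  | zero => simp [T]
  | one => simp [T]
  | more n ih₀ ih₁ =>
    rw [T]
    refine (natDegree_sub_le _ _).trans (max_le ?_ (by omega))
    exact natDegree_mul_le.trans (by simp only [natDegree_X]; omega)

theorem eval_T_two_mul_cos (n : ℕ) (θ : ℂ) :
    (T n).eval (2 * Complex.cos θ) = 2 * Complex.cos (n * θ) := by
  simp [T_eq_chebyshev_C]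

theorem eval_derivative_T_two_mul_cos (n : ℕ) (θ : ℂ) :
    (T n).derivative.eval (2 * Complex.cos θ) * Complex.sin θ = n * Complex.sin (n * θ) := by
  have hL : HasDerivAt (fun θ => (T n).eval (2 * Complex.cos θ))
      ((T n).derivative.eval (2 * Complex.cos θ) * (2 * -Complex.sin θ)) θ :=
    ((T n).hasDerivAt _).comp θ ((Complex.hasDerivAt_cos θ).const_mul 2)
  have hR : HasDerivAt (fun θ => 2 * Complex.cos (n * θ))
      (2 * (-Complex.sin (n * θ) * (n * 1))) θ :=
    ((Complex.hasDerivAt_cos _).comp θ ((hasDerivAt_id θ).const_mul _)).const_mul 2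
  simp only [eval_T_two_mul_cos] at hL
  linear_combination -(hL.unique hR) / 2

theorem derivative_T_ne_zero {n : ℕ} (hn : n ≠ 0) : (T n).derivative ≠ 0 := by
  intro h
  have h' := eval_derivative_T_two_mul_cos n (π / (2 * n))
  have hθ : (n : ℂ) * (π / (2 * n)) = π / 2 := by field_simp
  rw [h, hθ, Complex.sin_pi_div_two] at h'
  exact hn (by simpa [eq_comm] using h')

noncomputable def chebyshevExtremum (n k : ℕ) : ℝ := 2 * Real.cos (k * π / n)

theorem eval_T_chebyshevExtremum {n : ℕ} (hn : n ≠ 0) (k : ℕ) :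
    (T n).eval (chebyshevExtremum n k : ℂ) = 2 * (-1) ^ k := by
  have hθ : (n : ℝ) * (k * π / n) = k * π := by field_simp
  rw [chebyshevExtremum, Complex.ofReal_mul, Complex.ofReal_ofNat, Complex.ofReal_cos,
    eval_T_two_mul_cos, ← Complex.ofReal_natCast, ← Complex.ofReal_mul, hθ, ← Complex.ofReal_cos,
    Real.cos_nat_mul_pi]
  push_cast
  ring

theorem natCast_mul_pi_div_mem_Ioo {n k : ℕ} (hk : k ∈ Finset.Ioo 0 n) :
    k * π / n ∈ Set.Ioo 0 π := by
  obtain ⟨hk₀, hkn⟩ := Finset.mem_Ioo.mp hk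
  have hn : (0 : ℝ) < n := by exact_mod_cast hk₀.trans hkn
  have hkn' : (k : ℝ) < n := by exact_mod_cast hkn
  constructor
  · positivity
  · rw [div_lt_iff₀ hn]
    nlinarith [Real.pi_pos]

theorem eval_derivative_T_chebyshevExtremum {n k : ℕ} (hk : k ∈ Finset.Ioo 0 n) :
    (T n).derivative.eval (chebyshevExtremum n k : ℂ) = 0 := by
  obtain ⟨hθ₀, hθπ⟩ := natCast_mul_pi_div_mem_Ioo hk
  have hn : (n : ℂ) ≠ 0 := by
    have := Finset.mem_Ioo.mp hk; exact_mod_cast (by omega : n ≠ 0)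
  have h := eval_derivative_T_two_mul_cos n (k * π / n : ℝ)
  have hsin : Complex.sin (k * π / n : ℝ) ≠ 0 := by
    rw [← Complex.ofReal_sin]
    exact_mod_cast (Real.sin_pos_of_pos_of_lt_pi hθ₀ hθπ).ne'
  have hnθ : (n : ℂ) * ((k * π / n : ℝ) : ℂ) = k * π := by push_cast; field_simp
  rw [hnθ, Complex.sin_nat_mul_pi, mul_zero, ← Complex.ofReal_cos] at h
  simpa [chebyshevExtremum] using (mul_eq_zero.mp h).resolve_right hsin

theorem chebyshevExtremum_injOn (n : ℕ) :
    Set.InjOn (chebyshevExtremum n) (Finset.Ioo 0 n) := by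
  intro k hk l hl hkl
  have hθ := Real.injOn_cos (Set.Ioo_subset_Icc_self (natCast_mul_pi_div_mem_Ioo hk))
    (Set.Ioo_subset_Icc_self (natCast_mul_pi_div_mem_Ioo hl))
    (by simpa [chebyshevExtremum] using hkl)
  have hn : (n : ℝ) ≠ 0 := by
    have := Finset.mem_Ioo.mp hk; exact_mod_cast (by omega : n ≠ 0)
  field_simp at hθ
  exact_mod_cast hθ

theorem eval_derivative_T_eq_zero_iff {n : ℕ} (hn : n ≠ 0) {x : ℂ} :
    (T n).derivative.eval x = 0 ↔ ∃ k ∈ Finset.Ioo 0 n, (chebyshevExtremum n k : ℂ) = x := by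
  have hsub : (Finset.Ioo 0 n).image (Complex.ofReal ∘ chebyshevExtremum n) ⊆
      (T n).derivative.roots.toFinset := by
    intro x hx
    obtain ⟨k, hk, rfl⟩ := Finset.mem_image.mp hx
    simpa [derivative_T_ne_zero hn] using eval_derivative_T_chebyshevExtremum hk
  have hcard : (T n).derivative.roots.toFinset.card ≤
      ((Finset.Ioo 0 n).image (Complex.ofReal ∘ chebyshevExtremum n)).card := by
    rw [Finset.card_image_of_injOn ((Complex.ofReal_injective.injOn).comp
      (chebyshevExtremum_injOn n) (Set.mapsTo_image _ _)), Nat.card_Ioo]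
    calc (T n).derivative.roots.toFinset.card ≤ Multiset.card (T n).derivative.roots :=
          Multiset.toFinset_card_le _
      _ ≤ (T n).derivative.natDegree := card_roots' _
      _ ≤ (T n).natDegree - 1 := natDegree_derivative_le _
      _ ≤ n - 1 := Nat.sub_le_sub_right (natDegree_T_le n) 1
  have hE := Finset.eq_of_subset_of_card_le hsub hcard
  simpa [derivative_T_ne_zero hn] using (Finset.ext_iff.mp hE x).symm

theorem im_eq_zero_of_eval_derivative_T_eq_zero {n : ℕ} (hn : n ≠ 0) {x : ℂ}
    (hx : (T n).derivative.eval x = 0) : x.im = 0 := by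
  obtain ⟨k, -, rfl⟩ := (eval_derivative_T_eq_zero_iff hn).mp hx
  exact Complex.ofReal_im _

def critLevelSet (n : ℕ) (c : ℂ) : Set ℂ :=
  {x | (T n).derivative.eval x = 0 ∧ (T n).eval x = c}

theorem critLevelSet_finite {n : ℕ} (hn : n ≠ 0) (c : ℂ) : (critLevelSet n c).Finite :=
  (T n).derivative.roots.toFinset.finite_toSet.subset fun x hx => by
    simpa [derivative_T_ne_zero hn] using hx.1

theorem disjoint_critLevelSet (n : ℕ) {c d : ℂ} (hcd : c ≠ d) :
    Disjoint (critLevelSet n c) (critLevelSet n d) :=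
  Set.disjoint_left.mpr fun _ hc hd => hcd (hc.2.symm.trans hd.2)

theorem critLevelSet_eq_image {n : ℕ} (hn : n ≠ 0) (c : ℂ) :
    critLevelSet n c = (Complex.ofReal ∘ chebyshevExtremum n) ''
      {k ∈ (Finset.Ioo 0 n : Set ℕ) | 2 * (-1) ^ k = c} := by
  ext x
  constructor
  · rintro ⟨hx, rfl⟩
    obtain ⟨k, hk, rfl⟩ := (eval_derivative_T_eq_zero_iff hn).mp hx
    exact ⟨k, ⟨hk, (eval_T_chebyshevExtremum hn k).symm⟩, rfl⟩
  · rintro ⟨k, ⟨hk, rfl⟩, rfl⟩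
    exact ⟨eval_derivative_T_chebyshevExtremum hk, eval_T_chebyshevExtremum hn k⟩

theorem eval_T_eq_two_or_neg_two {n : ℕ} (hn : n ≠ 0) {x : ℂ}
    (hx : (T n).derivative.eval x = 0) : (T n).eval x = 2 ∨ (T n).eval x = -2 := by
  obtain ⟨k, -, rfl⟩ := (eval_derivative_T_eq_zero_iff hn).mp hx
  rw [eval_T_chebyshevExtremum hn]
  rcases neg_one_pow_eq_or ℂ k with h | h <;> simp [h]

theorem card_filter_even_Ioo (n : ℕ) : (Finset.Ioo 0 n |>.filter Even).card = (n - 1) / 2 := by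
  have h : Finset.Ioo 0 n = Finset.Ioc 0 (n - 1) := by ext; simp; omega
  simpa only [h, even_iff_two_dvd] using Nat.Ioc_filter_dvd_card_eq_div (n - 1) 2

theorem card_filter_odd_Ioo (n : ℕ) : (Finset.Ioo 0 n |>.filter Odd).card = n / 2 := by
  have h := Finset.card_filter_add_card_filter_not (s := Finset.Ioo 0 n) Even
  simp only [Nat.not_even_iff_odd, card_filter_even_Ioo, Nat.card_Ioo, Nat.sub_zero] at h
  suffices (n - 1) / 2 + (Finset.Ioo 0 n |>.filter Odd).card = n - 1 by omega
  convert h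

theorem ncard_critLevelSet {n : ℕ} (hn : n ≠ 0) {c : ℂ} (p : ℕ → Prop) [DecidablePred p]
    (hp : ∀ k, 2 * (-1) ^ k = c ↔ p k) :
    (critLevelSet n c).ncard = (Finset.Ioo 0 n |>.filter p).card := by
  have hinj : Set.InjOn (Complex.ofReal ∘ chebyshevExtremum n) (Finset.Ioo 0 n) :=
    Complex.ofReal_injective.injOn.comp (chebyshevExtremum_injOn n) (Set.mapsTo_image _ _)
  rw [critLevelSet_eq_image hn, (hinj.mono (Set.sep_subset _ _)).ncard_image,
    ← Set.ncard_coe_finset]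
  congr 1
  ext k
  simp [hp]

theorem ncard_critLevelSet_two {n : ℕ} (hn : n ≠ 0) :
    (critLevelSet n 2).ncard = (n - 1) / 2 := by
  rw [ncard_critLevelSet hn Even fun k => ?_, card_filter_even_Ioo]
  rw [← neg_one_pow_eq_one_iff_even (R := ℂ) (by norm_num)]
  exact ⟨fun h => by linear_combination h / 2, fun h => by linear_combination 2 * h⟩

theorem ncard_critLevelSet_neg_two {n : ℕ} (hn : n ≠ 0) :
    (critLevelSet n (-2)).ncard = n / 2 := by
  rw [ncard_critLevelSet hn Odd fun k => ?_, card_filter_odd_Ioo]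
  rw [← neg_one_pow_eq_neg_one_iff_odd (R := ℂ) (by norm_num)]
  exact ⟨fun h => by linear_combination h / 2, fun h => by linear_combination 2 * h⟩

theorem setOf_singular_eq_union_prod_critLevelSet {n : ℕ} (hn : n ≠ 0) (m : ℕ) :
    {p : ℂ × ℂ | (T n).eval p.1 = (T m).eval p.2 ∧
      (T n).derivative.eval p.1 = 0 ∧ (T m).derivative.eval p.2 = 0} =
    critLevelSet n 2 ×ˢ critLevelSet m 2 ∪ critLevelSet n (-2) ×ˢ critLevelSet m (-2) := by
  ext ⟨x, y⟩
  simp only [critLevelSet, Set.mem_ofPred_eq, Set.mem_union, Set.mem_prod]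
  constructor
  · rintro ⟨hxy, hx, hy⟩
    rcases eval_T_eq_two_or_neg_two hn hx with h | h
    · exact .inl ⟨⟨hx, h⟩, hy, hxy ▸ h⟩
    · exact .inr ⟨⟨hx, h⟩, hy, hxy ▸ h⟩
  · rintro (⟨⟨hx, hx₂⟩, hy, hy₂⟩ | ⟨⟨hx, hx₂⟩, hy, hy₂⟩) <;> exact ⟨hx₂.trans hy₂.symm, hx, hy⟩

theorem implicit_chebyshev_singular_points (n m : ℕ) (hn : 1 ≤ n) (hm : 1 ≤ m)
    (S : Set (ℂ × ℂ))
    (hS : S = {p : ℂ × ℂ | (T n).eval p.1 = (T m).eval p.2 ∧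
      ((T n).derivative).eval p.1 = 0 ∧ ((T m).derivative).eval p.2 = 0}) :
    S.ncard = ((n - 1) / 2) * ((m - 1) / 2) + (n / 2) * (m / 2) ∧
    ∀ p ∈ S, (p.1.im = 0 ∧ p.2.im = 0) ∧
      (((T n).eval p.1 = 2 ∧ (T m).eval p.2 = 2) ∨
       ((T n).eval p.1 = -2 ∧ (T m).eval p.2 = -2)) := by
  replace hn : n ≠ 0 := by omega
  replace hm : m ≠ 0 := by omega
  have hS' := hS.trans (setOf_singular_eq_union_prod_critLevelSet hn m)
  refine ⟨?_, fun p hp => ⟨?_, ?_⟩⟩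
  · rw [hS', Set.ncard_union_eq
      (Set.disjoint_prod.mpr (.inl (disjoint_critLevelSet n (by norm_num))))
      ((critLevelSet_finite hn 2).prod (critLevelSet_finite hm 2))
      ((critLevelSet_finite hn (-2)).prod (critLevelSet_finite hm (-2))),
      Set.ncard_prod, Set.ncard_prod, ncard_critLevelSet_two hn, ncard_critLevelSet_two hm,
      ncard_critLevelSet_neg_two hn, ncard_critLevelSet_neg_two hm]
  · rw [hS] at hp
    exact ⟨im_eq_zero_of_eval_derivative_T_eq_zero hn hp.2.1,
      im_eq_zero_of_eval_derivative_T_eq_zero hm hp.2.2⟩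
  · rw [hS'] at hp
    exact hp.imp (fun h => ⟨h.1.2, h.2.2⟩) (fun h => ⟨h.1.2, h.2.2⟩)
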